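/- If Y₁ and Y₂ are finite-rank strong subgroups of K^×, then Y₁ ∩ Y₂ is a strong subgroup of K^×. (The intersection of two strong sets is strong.) -/

import Mathlib

/-!
The predimension is submodular on finite-rank subgroups: `td` is the rank function of the
algebraic matroid of `K` over `ℚ` (and `A ⊔ B` is algebraic over `A ∪ B`), while `rk (· ⊓ G)` is
supermodular by the modular law for ranks. Finiteness of `td` comes from `td ≤ rk`, since
algebraically independent units are multiplicatively independent.

If `Y₁ ⊓ Y₂ ≤ W`, strength of `Y₁` applied to `W ⊔ Y₁` together with submodularity gives
`δ(W ⊓ Y₁) ≤ δ(W)`, and the same argument with `Y₂` gives `δ(W ⊓ Y₁ ⊓ Y₂) ≤ δ(W ⊓ Y₁)`;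
finally `W ⊓ Y₁ ⊓ Y₂ = Y₁ ⊓ Y₂`.
-/

noncomputable section

namespace GreenPoints

variable {K : Type*} [Field K] [CharZero K]

/-- The rank of a (multiplicative) subgroup of `Kˣ`: the ℤ-module rank of the
underlying abelian group, i.e. the dimension over ℚ of `S ⊗ ℚ`. -/
def grpRank (S : Subgroup Kˣ) : Cardinal := Module.rank ℤ (Additive S)

/-- A subgroup of `Kˣ` has finite rank. -/
def FiniteRank (S : Subgroup Kˣ) : Prop := grpRank S < Cardinal.aleph0

/-- The transcendence degree over ℚ of the subfield of `K` generated by a subset `s` of `K`: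
the supremum of the cardinalities of subsets of `s` that are algebraically
independent over ℚ. -/
def tdSet (s : Set K) : Cardinal :=
  ⨆ t : {t : Set K // t ⊆ s ∧ AlgebraicIndependent ℚ ((↑) : t → K)}, Cardinal.mk t.1

/-- The transcendence degree over ℚ of the subfield of `K` generated by a subgroup of `Kˣ`. -/
def td (S : Subgroup Kˣ) : Cardinal := tdSet (Units.val '' (S : Set Kˣ))

/-- The predimension `δ(S) = 2·td(S) − rk(S ∩ G)` (with respect to the subgroup `G`
of green points). -/
def delta (G S : Subgroup Kˣ) : ℤ :=
  2 * ((td S).toNat : ℤ) - ((grpRank (S ⊓ G)).toNat : ℤ)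

/-- `Y` is strong in `T` (with respect to `G`): `δ(W) ≥ δ(Y)` for every finite-rank
subgroup `W` with `Y ⊆ W ⊆ T`. -/
def StrongIn (G Y T : Subgroup Kˣ) : Prop :=
  ∀ W : Subgroup Kˣ, FiniteRank W → Y ≤ W → W ≤ T → delta G Y ≤ delta G W

/-- `Y` is strong: strong in `Kˣ`. -/
def Strong (G Y : Subgroup Kˣ) : Prop := StrongIn G Y ⊤

/-- A subgroup `S` of `Kˣ` is root-closed: `x ∈ S` whenever `x^n ∈ S` for some `n ≥ 1`. -/
def RootClosed (S : Subgroup Kˣ) : Prop :=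
  ∀ (x : Kˣ) (n : ℕ), 1 ≤ n → x ^ n ∈ S → x ∈ S

/-- The subfield of `K` generated by a subgroup of `Kˣ`. -/
def fieldOf (S : Subgroup Kˣ) : Subfield K := Subfield.closure (Units.val '' (S : Set Kˣ))

open Cardinal MvPolynomial

theorem _root_.MvPolynomial.eq_of_prod_X_pow_eq {ι R : Type*} [CommSemiring R] [Nontrivial R]
    [DecidableEq ι] {s : Finset ι} {a b : ι → ℕ}
    (h : (∏ j ∈ s, X j ^ a j : MvPolynomial ι R) = ∏ j ∈ s, X j ^ b j) {i : ι} (hi : i ∈ s) :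
    a i = b i := by
  simp only [X_pow_eq_monomial, ← monomial_sum_one] at h
  simpa [Finset.sum_apply', Finsupp.single_apply, hi] using
    DFunLike.congr_fun (monomial_left_injective one_ne_zero h) i

theorem _root_.AlgebraicIndependent.linearIndependent_ofMul {ι R A : Type*} [CommRing R]
    [Nontrivial R] [CommRing A] [Algebra R A] {v : ι → Aˣ}
    (hv : AlgebraicIndependent R fun i => (v i : A)) :
    LinearIndependent ℤ fun i => Additive.ofMul (v i) := by
  classical
  rw [linearIndependent_iff']
  intro s c hc i hi
  have hprod : ∏ j ∈ s, v j ^ c j = 1 := by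
    simpa [toMul_sum, toMul_zsmul] using congrArg Additive.toMul hc
  -- splitting each exponent into its positive and negative parts gives a relation between monomials
  have hsplit : ∀ j, v j ^ c j = v j ^ (c j).toNat * (v j ^ (-c j).toNat)⁻¹ := fun j => by
    rw [← zpow_natCast, ← zpow_natCast, ← zpow_neg, ← zpow_add]
    congr 1
    omega
  have hunits : ∏ j ∈ s, v j ^ (c j).toNat = ∏ j ∈ s, v j ^ (-c j).toNat := by
    simpa only [hsplit, Finset.prod_mul_distrib, Finset.prod_inv_distrib, mul_inv_eq_one]
      using hprod
  have hpoly : (∏ j ∈ s, X j ^ (c j).toNat : MvPolynomial ι R) = ∏ j ∈ s, X j ^ (-c j).toNat :=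
    hv <| by simpa [map_prod] using congrArg Units.val hunits
  have := MvPolynomial.eq_of_prod_X_pow_eq hpoly hi
  omega

theorem _root_.AlgebraicIndependent.adjoin_subset_matroid_closure {R A : Type*} [CommRing R]
    [CommRing A] [IsDomain A] [Algebra R A] [FaithfulSMul R A] (s : Set A) :
    (Algebra.adjoin R s : Set A) ⊆ (AlgebraicIndependent.matroid R A).closure s := by
  intro x hx
  rw [AlgebraicIndependent.matroid_closure_eq]
  exact isAlgebraic_algebraMap (⟨x, hx⟩ : Algebra.adjoin R s)

section SubgroupRank

variable {H : Type*} [CommGroup H]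

theorem _root_.Subgroup.rank_mono {A B : Subgroup H} (h : A ≤ B) :
    Module.rank ℤ (Additive A) ≤ Module.rank ℤ (Additive B) :=
  Submodule.rank_mono
    (show AddSubgroup.toIntSubmodule A.toAddSubgroup ≤ AddSubgroup.toIntSubmodule B.toAddSubgroup
      from h)

theorem _root_.Subgroup.rank_sup_add_rank_inf (A B : Subgroup H) :
    Module.rank ℤ (Additive ↥(A ⊔ B)) + Module.rank ℤ (Additive ↥(A ⊓ B)) =
      Module.rank ℤ (Additive A) + Module.rank ℤ (Additive B) := by
  have := Submodule.rank_sup_add_rank_inf_eq (AddSubgroup.toIntSubmodule A.toAddSubgroup)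
    (AddSubgroup.toIntSubmodule B.toAddSubgroup)
  rwa [← map_sup, ← map_inf, ← map_sup, ← map_inf] at this

theorem _root_.Subgroup.rank_sup_le (A B : Subgroup H) :
    Module.rank ℤ (Additive ↥(A ⊔ B)) ≤ Module.rank ℤ (Additive A) + Module.rank ℤ (Additive B) :=
  (Subgroup.rank_sup_add_rank_inf A B).symm ▸ le_self_add

theorem _root_.Subgroup.rank_inf_add_rank_inf_le (G A B : Subgroup H) :
    Module.rank ℤ (Additive ↥(A ⊓ G)) + Module.rank ℤ (Additive ↥(B ⊓ G)) ≤
      Module.rank ℤ (Additive ↥((A ⊔ B) ⊓ G)) + Module.rank ℤ (Additive ↥((A ⊓ B) ⊓ G)) := by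
  have hinf : (A ⊓ G) ⊓ (B ⊓ G) = (A ⊓ B) ⊓ G := inf_inf_distrib_right A B G |>.symm
  have hsup : (A ⊓ G) ⊔ (B ⊓ G) ≤ (A ⊔ B) ⊓ G :=
    sup_le (inf_le_inf_right _ le_sup_left) (inf_le_inf_right _ le_sup_right)
  rw [← Subgroup.rank_sup_add_rank_inf, hinf]
  exact add_le_add (Subgroup.rank_mono hsup) le_rfl

end SubgroupRank

theorem _root_.Cardinal.toNat_add_le_toNat_add {a b c d : Cardinal} (h : a + b ≤ c + d)
    (hc : c < ℵ₀) (hd : d < ℵ₀) : a.toNat + b.toNat ≤ c.toNat + d.toNat := by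
  have hcd := add_lt_aleph0 hc hd
  have hab := h.trans_lt hcd
  rw [← toNat_add (self_le_add_right a b |>.trans_lt hab) (self_le_add_left b a |>.trans_lt hab),
    ← toNat_add hc hd]
  exact toNat_le_toNat h hcd

theorem FiniteRank.mono {K : Type*} [Field K] {A B : Subgroup Kˣ} (h : A ≤ B)
    (hB : FiniteRank B) : FiniteRank A :=
  (Subgroup.rank_mono h).trans_lt hB

theorem FiniteRank.sup {K : Type*} [Field K] {A B : Subgroup Kˣ} (hA : FiniteRank A)
    (hB : FiniteRank B) : FiniteRank (A ⊔ B) :=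
  (Subgroup.rank_sup_le A B).trans_lt (add_lt_aleph0 hA hB)

theorem tdSet_eq_cRk (s : Set K) : tdSet s = (AlgebraicIndependent.matroid ℚ K).cRk s := by
  refine le_antisymm (ciSup_le' fun t => Matroid.Indep.cardinalMk_le_cRk_of_subset t.2.2 t.2.1)
    (Matroid.cRk_le_iff.2 fun I hI => ?_)
  exact le_ciSup bddAbove_of_small (⟨I, hI.subset, hI.indep⟩ :
    {t : Set K // t ⊆ s ∧ AlgebraicIndependent ℚ ((↑) : t → K)})

theorem td_le_grpRank (S : Subgroup Kˣ) : td S ≤ grpRank S := by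
  refine ciSup_le' fun ⟨t, hts, ht⟩ => ?_
  have hlift : ∀ x : t, ∃ u : S, ((u : Kˣ) : K) = x := fun x => by
    obtain ⟨u, hu, hux⟩ := hts x.2
    exact ⟨⟨u, hu⟩, hux⟩
  choose w hw using hlift
  have hwind : AlgebraicIndependent ℚ fun x => ((w x : Kˣ) : K) := by
    simpa only [hw] using ht
  exact (hwind.linearIndependent_ofMul.of_comp
    S.subtype.toAdditive.toIntLinearMap).cardinal_le_rank

theorem td_lt_aleph0 {S : Subgroup Kˣ} (h : FiniteRank S) : td S < ℵ₀ :=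
  (td_le_grpRank S).trans_lt h

theorem image_val_sup_subset_adjoin (A B : Subgroup Kˣ) :
    Units.val '' ((A ⊔ B : Subgroup Kˣ) : Set Kˣ) ⊆
      Algebra.adjoin ℚ (Units.val '' (A : Set Kˣ) ∪ Units.val '' (B : Set Kˣ)) := by
  rintro _ ⟨x, hx, rfl⟩
  obtain ⟨y, hy, z, hz, rfl⟩ := Subgroup.mem_sup.mp hx
  rw [Units.val_mul]
  exact mul_mem (Algebra.subset_adjoin (.inl ⟨y, hy, rfl⟩))
    (Algebra.subset_adjoin (.inr ⟨z, hz, rfl⟩))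

theorem td_sup_add_td_inf_le (A B : Subgroup Kˣ) : td (A ⊔ B) + td (A ⊓ B) ≤ td A + td B := by
  let M := AlgebraicIndependent.matroid ℚ K
  set a := Units.val '' (A : Set Kˣ)
  set b := Units.val '' (B : Set Kˣ)
  simp only [td, tdSet_eq_cRk]
  calc M.cRk (Units.val '' ↑(A ⊔ B)) + M.cRk (Units.val '' ↑(A ⊓ B))
      ≤ M.cRk (M.closure (a ∪ b)) + M.cRk (a ∩ b) := by
        gcongr
        · exact M.cRk_le_of_subset ((image_val_sup_subset_adjoin A B).trans
            (AlgebraicIndependent.adjoin_subset_matroid_closure _))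
        · exact M.cRk_le_of_subset (Set.image_inter_subset _ _ _)
    _ = M.cRk (a ∩ b) + M.cRk (a ∪ b) := by rw [Matroid.cRk_closure, add_comm]
    _ ≤ M.cRk a + M.cRk b := M.cRk_inter_add_cRk_union_le a b

theorem delta_sup_add_delta_inf_le (G : Subgroup Kˣ) {A B : Subgroup Kˣ} (hA : FiniteRank A)
    (hB : FiniteRank B) : delta G (A ⊔ B) + delta G (A ⊓ B) ≤ delta G A + delta G B := by
  have htd := Cardinal.toNat_add_le_toNat_add (td_sup_add_td_inf_le A B)
    (td_lt_aleph0 hA) (td_lt_aleph0 hB)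
  have hrk := Cardinal.toNat_add_le_toNat_add (Subgroup.rank_inf_add_rank_inf_le G A B)
    ((hA.sup hB).mono inf_le_left) (hA.mono (inf_le_left.trans inf_le_left))
  unfold delta grpRank
  omega

theorem Strong.delta_inf_le {G Y W : Subgroup Kˣ} (hY : Strong G Y) (hYf : FiniteRank Y)
    (hW : FiniteRank W) : delta G (W ⊓ Y) ≤ delta G W := by
  have := hY (W ⊔ Y) (hW.sup hYf) le_sup_right le_top
  have := delta_sup_add_delta_inf_le G hW hYf
  omega

/-- The intersection of two finite-rank strong subgroups of `Kˣ` is strong. -/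
theorem strong_inf {K : Type*} [Field K] [CharZero K] (G Y₁ Y₂ : Subgroup Kˣ)
    (h1 : FiniteRank Y₁) (h2 : FiniteRank Y₂)
    (hs1 : Strong G Y₁) (hs2 : Strong G Y₂) : Strong G (Y₁ ⊓ Y₂) := by
  intro W hW hYW _
  have hWY₁ : W ⊓ Y₁ ⊓ Y₂ = Y₁ ⊓ Y₂ := by rw [inf_assoc, inf_eq_right.mpr hYW]
  calc delta G (Y₁ ⊓ Y₂) = delta G (W ⊓ Y₁ ⊓ Y₂) := by rw [hWY₁]
    _ ≤ delta G (W ⊓ Y₁) := hs2.delta_inf_le h2 (hW.mono inf_le_left)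
    _ ≤ delta G W := hs1.delta_inf_le h1 hW

end GreenPoints

end
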